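/- arXiv:quant-ph/0302053 — 7 statements merged into one kernel-verified Lean document; each statement's English description precedes it below -/
import Mathlib

section
/- In an orthomodular lattice, if b is compatible with each element a_i of a finite family, then b is compatible with the supremum of the a_i, and b ∧ (⋁ a_i) = ⋁ (a_i ∧ b). -/
/-- A quantum logic: an orthomodular lattice. -/
class QuantumLogic (L : Type*) extends Lattice L, BoundedOrder L, Compl L where
  compl_compl : ∀ a : L, aᶜᶜ = a
  sup_compl : ∀ a : L, a ⊔ aᶜ = ⊤
  compl_le_compl : ∀ a b : L, a ≤ b → bᶜ ≤ aᶜ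
  orthomodular : ∀ a b : L, a ≤ b → b = a ⊔ aᶜ ⊓ b

section Defs
variable {L : Type*} [QuantumLogic L]

/-- Orthogonality: `a ⊥ b` iff `a ≤ bᶜ`. -/
def Orth (a b : L) : Prop := a ≤ bᶜ

/-- Compatibility: `a ↔ b` iff they decompose via mutually orthogonal elements. -/
def Compatible (a b : L) : Prop :=
  ∃ a₁ b₁ c : L, Orth a₁ b₁ ∧ Orth a₁ c ∧ Orth b₁ c ∧ a = a₁ ⊔ c ∧ b = b₁ ⊔ c

/-- An s-map on a quantum logic. -/
structure IsSMap (p : L → L → ℝ) : Prop where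
  nonneg : ∀ a b, 0 ≤ p a b
  le_one : ∀ a b, p a b ≤ 1
  top_top : p ⊤ ⊤ = 1
  orth_zero : ∀ a b, Orth a b → p a b = 0
  add_left : ∀ a b c, Orth a b → p (a ⊔ b) c = p a c + p b c
  add_right : ∀ a b c, Orth a b → p c (a ⊔ b) = p c a + p c b

/-- A conditional system in `L`. -/
def IsCondSystem (Lc : Set L) : Prop :=
  (⊥ : L) ∉ Lc ∧ (∀ a ∈ Lc, ∀ b ∈ Lc, a ⊔ b ∈ Lc) ∧
    ∀ a ∈ Lc, ∀ b ∈ Lc, a < b → aᶜ ⊓ b ∈ Lc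

/-- A conditional state `f : L × L_c → [0,1]`. -/
structure IsConditionalState (Lc : Set L) (f : L → L → ℝ) : Prop where
  nonneg : ∀ a b, b ∈ Lc → 0 ≤ f a b
  le_one : ∀ a b, b ∈ Lc → f a b ≤ 1
  state_bot : ∀ a ∈ Lc, f ⊥ a = 0
  state_top : ∀ a ∈ Lc, f ⊤ a = 1
  state_add : ∀ a ∈ Lc, ∀ b c : L, Orth b c → f (b ⊔ c) a = f b a + f c a
  diag : ∀ a ∈ Lc, f a a = 1
  cond : ∀ s : Finset L, (↑s : Set L) ⊆ Lc →
    (∀ a ∈ s, ∀ b ∈ s, a ≠ b → Orth a b) → s.sup id ∈ Lc →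
    ∀ d : L, f d (s.sup id) = ∑ a ∈ s, f a (s.sup id) * f d a

/-- A finite-spectrum discrete observable, given by its family of atoms
(mutually orthogonal events whose join is `⊤`). -/
def IsFinObs {n : ℕ} (e : Fin n → L) : Prop :=
  (∀ i j, i ≠ j → Orth (e i) (e j)) ∧ Finset.univ.sup e = ⊤

/-- Expectation `ν(x)` of a finite-spectrum observable with values `v` and events `e`
in the state `ν(b) = p(b,b)`. -/
noncomputable def nuObs (p : L → L → ℝ) {n : ℕ} (v : Fin n → ℝ) (e : Fin n → L) : ℝ :=
  ∑ i, v i * p (e i) (e i)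

/-- First joint moment `p(x,y)` of two finite-spectrum observables. -/
noncomputable def jointMoment (p : L → L → ℝ) {n m : ℕ} (xv : Fin n → ℝ) (xe : Fin n → L)
    (yv : Fin m → ℝ) (ye : Fin m → L) : ℝ :=
  ∑ i, ∑ j, xv i * yv j * p (xe i) (ye j)

/-- Covariance `c(x,y) = p(x,y) - ν(x)ν(y)`. -/
noncomputable def covObs (p : L → L → ℝ) {n m : ℕ} (xv : Fin n → ℝ) (xe : Fin n → L)
    (yv : Fin m → ℝ) (ye : Fin m → L) : ℝ :=
  jointMoment p xv xe yv ye - nuObs p xv xe * nuObs p yv ye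

end Defs

section Aux
variable {L : Type*} [QuantumLogic L]

lemma qcc (a : L) : aᶜᶜ = a := QuantumLogic.compl_compl a

lemma qmono {a b : L} (h : a ≤ b) : bᶜ ≤ aᶜ := QuantumLogic.compl_le_compl a b h

lemma qle_compl {a b : L} (h : a ≤ bᶜ) : b ≤ aᶜ := by
  have := qmono h; rwa [qcc] at this

lemma qbot_compl : (⊥ : L)ᶜ = ⊤ := by
  have := QuantumLogic.sup_compl (⊥ : L); simpa using this

lemma qtop_compl : (⊤ : L)ᶜ = ⊥ := by rw [← qbot_compl, qcc]

lemma qinf_compl (a : L) : a ⊓ aᶜ = ⊥ := by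
  have h1 : a ≤ (a ⊓ aᶜ)ᶜ := qle_compl inf_le_right
  have h2 : aᶜ ≤ (a ⊓ aᶜ)ᶜ := qmono inf_le_left
  have : (⊤ : L) ≤ (a ⊓ aᶜ)ᶜ := by
    rw [← QuantumLogic.sup_compl a]; exact sup_le h1 h2
  have : (a ⊓ aᶜ)ᶜ = ⊤ := top_unique this
  calc a ⊓ aᶜ = (a ⊓ aᶜ)ᶜᶜ := (qcc _).symm
    _ = ⊤ᶜ := by rw [this]
    _ = ⊥ := qtop_compl

lemma qdm_sup (a b : L) : (a ⊔ b)ᶜ = aᶜ ⊓ bᶜ := by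
  apply le_antisymm
  · exact le_inf (qmono le_sup_left) (qmono le_sup_right)
  · apply qle_compl
    exact sup_le (qle_compl inf_le_left) (qle_compl inf_le_right)

lemma qle_bot {a b : L} (h1 : a ≤ b) (h2 : a ≤ bᶜ) : a = ⊥ :=
  le_antisymm (by rw [← qinf_compl b]; exact le_inf h1 h2) bot_le

/-- If `b = x ⊔ y` with `x ⊥ y`, then `b ⊓ xᶜ = y`. -/
lemma qdecomp_inf {b x y : L} (hxy : x ≤ yᶜ) (hb : b = x ⊔ y) : b ⊓ xᶜ = y := by
  have hy : y ≤ b ⊓ xᶜ := le_inf (hb ▸ le_sup_right) (qle_compl hxy)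
  have hom := QuantumLogic.orthomodular y (b ⊓ xᶜ) hy
  have hz : yᶜ ⊓ (b ⊓ xᶜ) = ⊥ := by
    apply qle_bot (b := b)
    · exact le_trans inf_le_right inf_le_left
    · rw [hb, qdm_sup]
      exact le_inf (le_trans inf_le_right inf_le_right) inf_le_left
  rw [hz, sup_bot_eq] at hom
  exact hom

/-- Compatibility implies the canonical decomposition of the first argument. -/
lemma compatible_eq {b a : L} (h : Compatible b a) : b = b ⊓ a ⊔ b ⊓ aᶜ := by
  obtain ⟨x, y, c, hxy, hxc, hyc, hb, ha⟩ := h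
  have hca : c ≤ a := ha ▸ le_sup_right
  have hcb : c ≤ b := hb ▸ le_sup_right
  have hxb : x ≤ b := hb ▸ le_sup_left
  have hxa : x ≤ aᶜ := by
    rw [ha, qdm_sup]; exact le_inf hxy hxc
  apply le_antisymm
  · conv_lhs => rw [hb]
    exact sup_le (le_sup_right.trans' (le_inf hxb hxa)) (le_sup_left.trans' (le_inf hcb hca))
  · exact sup_le inf_le_left inf_le_left

/-- Symmetry of the canonical-decomposition form of compatibility. -/
lemma C_symm {a b : L} (h : b = b ⊓ a ⊔ b ⊓ aᶜ) : a = a ⊓ b ⊔ a ⊓ bᶜ := by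
  set c := a ⊓ b ⊔ a ⊓ bᶜ with hc
  have hca : c ≤ a := sup_le inf_le_left inf_le_left
  have hom := QuantumLogic.orthomodular c a hca
  have hz : cᶜ ⊓ a = ⊥ := by
    have h1 : cᶜ ⊓ a ≤ bᶜ := by
      have hbc : bᶜ = (b ⊓ a)ᶜ ⊓ (b ⊓ aᶜ)ᶜ := by rw [← qdm_sup, ← h]
      rw [hbc]
      refine le_inf ?_ ?_
      · have : b ⊓ a ≤ c := by rw [inf_comm]; exact le_sup_left
        exact inf_le_left.trans (qmono this)
      · exact inf_le_right.trans (qle_compl inf_le_right)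
    have h2 : cᶜ ⊓ a ≤ c := le_sup_right.trans' (le_inf inf_le_right h1)
    exact qle_bot h2 inf_le_left
  rw [hz, sup_bot_eq] at hom
  exact hom

lemma C_to_compatible {b a : L} (h : b = b ⊓ a ⊔ b ⊓ aᶜ) : Compatible b a := by
  refine ⟨b ⊓ aᶜ, a ⊓ bᶜ, b ⊓ a, ?_, ?_, ?_, ?_, ?_⟩
  · exact inf_le_right.trans (qmono inf_le_left)
  · exact inf_le_right.trans (qmono inf_le_right)
  · exact inf_le_right.trans (qmono inf_le_left)
  · rw [sup_comm]; exact h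
  · have hs := C_symm h
    conv_lhs => rw [hs]
    rw [sup_comm (a ⊓ b), inf_comm a b]
  
lemma compatible_of_C' {b a : L} (h : a = a ⊓ b ⊔ a ⊓ bᶜ) : Compatible b a :=
  C_to_compatible (C_symm h)

/-- Foulis–Holland distributivity. -/
lemma fh_inf {b a₁ a₂ : L} (h1 : Compatible b a₁) (h2 : Compatible b a₂) :
    b ⊓ (a₁ ⊔ a₂) = a₁ ⊓ b ⊔ a₂ ⊓ b := by
  set d := a₁ ⊓ b ⊔ a₂ ⊓ b with hd
  set e := b ⊓ (a₁ ⊔ a₂) with he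
  have hde : d ≤ e :=
    sup_le (le_inf inf_le_right (inf_le_left.trans le_sup_left))
      (le_inf inf_le_right (inf_le_left.trans le_sup_right))
  have hom := QuantumLogic.orthomodular d e hde
  have key : ∀ a : L, Compatible b a → a ⊓ b ≤ d → dᶜ ⊓ e ≤ aᶜ := by
    intro a hco hle
    have hdec := compatible_eq hco
    have horth : b ⊓ a ≤ (b ⊓ aᶜ)ᶜ := inf_le_right.trans (qle_compl inf_le_right)
    have hinf : b ⊓ (b ⊓ a)ᶜ = b ⊓ aᶜ := qdecomp_inf horth hdec
    have : dᶜ ⊓ e ≤ b ⊓ (b ⊓ a)ᶜ := by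
      refine le_inf (inf_le_right.trans inf_le_left) ?_
      have : b ⊓ a ≤ d := by rw [inf_comm]; exact hle
      exact inf_le_left.trans (qmono this)
    exact this.trans (hinf.le.trans inf_le_right)
  have hz : dᶜ ⊓ e = ⊥ := by
    apply qle_bot (b := a₁ ⊔ a₂)
    · exact inf_le_right.trans inf_le_right
    · rw [qdm_sup a₁ a₂]
      exact le_inf (key a₁ h1 le_sup_left) (key a₂ h2 le_sup_right)
  rw [hz, sup_bot_eq] at hom
  exact hom

lemma compat_sup {b a₁ a₂ : L} (h1 : Compatible b a₁) (h2 : Compatible b a₂) :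
    Compatible b (a₁ ⊔ a₂) := by
  have e1 : a₁ = a₁ ⊓ b ⊔ a₁ ⊓ bᶜ := C_symm (compatible_eq h1)
  have e2 : a₂ = a₂ ⊓ b ⊔ a₂ ⊓ bᶜ := C_symm (compatible_eq h2)
  apply compatible_of_C'
  apply le_antisymm
  · calc a₁ ⊔ a₂ = (a₁ ⊓ b ⊔ a₁ ⊓ bᶜ) ⊔ (a₂ ⊓ b ⊔ a₂ ⊓ bᶜ) := by rw [← e1, ← e2]
      _ ≤ (a₁ ⊔ a₂) ⊓ b ⊔ (a₁ ⊔ a₂) ⊓ bᶜ := by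
          refine sup_le (sup_le ?_ ?_) (sup_le ?_ ?_)
          · exact le_sup_left.trans' (inf_le_inf_right b le_sup_left)
          · exact le_sup_right.trans' (inf_le_inf_right bᶜ le_sup_left)
          · exact le_sup_left.trans' (inf_le_inf_right b le_sup_right)
          · exact le_sup_right.trans' (inf_le_inf_right bᶜ le_sup_right)
  · exact sup_le inf_le_left inf_le_left

lemma compat_bot (b : L) : Compatible b (⊥ : L) := by
  apply C_to_compatible
  rw [inf_bot_eq, qbot_compl, inf_top_eq, bot_sup_eq]

end Aux

/-- compatibility with each member of a finite family implies
compatibility with the join, and the distributive law holds. -/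
theorem compatible_finite_sup {L : Type*} [QuantumLogic L] {n : ℕ} (a : Fin n → L) (b : L)
    (h : ∀ i, Compatible b (a i)) :
    Compatible b (Finset.univ.sup a) ∧
      b ⊓ Finset.univ.sup a = Finset.univ.sup (fun i => a i ⊓ b) := by
  have key : ∀ s : Finset (Fin n), Compatible b (s.sup a) ∧
      b ⊓ s.sup a = s.sup (fun i => a i ⊓ b) := by
    intro s
    induction s using Finset.induction_on with
    | empty =>
        rw [Finset.sup_empty, Finset.sup_empty]
        exact ⟨compat_bot b, by simp⟩
    | insert i s hx ih =>
      rw [Finset.sup_insert, Finset.sup_insert]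
      refine ⟨compat_sup (h i) ih.1, ?_⟩
      rw [fh_inf (h i) ih.1, ← ih.2, inf_comm (s.sup a) b]
  exact key Finset.univ
end

section
/- Let p be an s-map on a quantum logic L. If a ≤ b, then p(a,b) = p(a,a). -/
/-- if `a ≤ b` then `p(a,b) = p(a,a)`. -/
theorem smap_le {L : Type*} [QuantumLogic L] (p : L → L → ℝ) (hp : IsSMap p)
    (a b : L) (h : a ≤ b) : p a b = p a a := by
  have horth : Orth a (aᶜ ⊓ b) := by
    have h1 : (aᶜ ⊓ b) ≤ aᶜ := inf_le_left
    have := QuantumLogic.compl_le_compl _ _ h1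
    rwa [QuantumLogic.compl_compl] at this
  have hb := QuantumLogic.orthomodular a b h
  calc p a b = p a (a ⊔ aᶜ ⊓ b) := by rw [← hb]
    _ = p a a + p a (aᶜ ⊓ b) := hp.add_right _ _ _ horth
    _ = p a a := by rw [hp.orth_zero _ _ horth, add_zero]
end

section
/- Let p be an s-map on a quantum logic L. If a ≤ b, then for every c ∈ L, p(a,c) ≤ p(b,c). -/
/-- if `a ≤ b` then `p(a,c) ≤ p(b,c)` for every `c`. -/
theorem smap_mono_left {L : Type*} [QuantumLogic L] (p : L → L → ℝ) (hp : IsSMap p)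
    (a b : L) (h : a ≤ b) : ∀ c : L, p a c ≤ p b c := by
  intro c
  have horth : Orth a (aᶜ ⊓ b) := by
    have h1 : aᶜ ⊓ b ≤ aᶜ := inf_le_left
    have := QuantumLogic.compl_le_compl _ _ h1
    rwa [QuantumLogic.compl_compl] at this
  have hb := QuantumLogic.orthomodular a b h
  calc p a c ≤ p a c + p (aᶜ ⊓ b) c := le_add_of_nonneg_right (hp.nonneg _ _)
    _ = p (a ⊔ aᶜ ⊓ b) c := (hp.add_left _ _ _ horth).symm
    _ = p b c := by rw [← hb]
end

section
/- Let p be an s-map on a quantum logic L. Then for all a, b ∈ L, p(a,b) ≤ p(b,b). -/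
theorem orth_compl_self {L : Type*} [QuantumLogic L] (c : L) : Orth c cᶜ := by
  rw [Orth, QuantumLogic.compl_compl]

namespace IsSMap

variable {L : Type*} [QuantumLogic L] {p : L → L → ℝ}

theorem add_compl_left (hp : IsSMap p) (a b : L) : p a b + p aᶜ b = p ⊤ b := by
  rw [← QuantumLogic.sup_compl a, hp.add_left a aᶜ b (orth_compl_self a)]

theorem le_top_left (hp : IsSMap p) (a b : L) : p a b ≤ p ⊤ b := by
  linarith [hp.add_compl_left a b, hp.nonneg aᶜ b]

theorem top_left_eq_diag (hp : IsSMap p) (b : L) : p ⊤ b = p b b := by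
  rw [← hp.add_compl_left b b, hp.orth_zero bᶜ b le_rfl, add_zero]

end IsSMap

/-- `p(a,b) ≤ p(b,b)` for all `a, b`. -/
theorem smap_le_diag {L : Type*} [QuantumLogic L] (p : L → L → ℝ) (hp : IsSMap p)
    (a b : L) : p a b ≤ p b b :=
  hp.top_left_eq_diag b ▸ hp.le_top_left a b
end

section
/- Let p be an s-map on a quantum logic L. Then the map ν defined by ν(b) = p(b,b) is a state on L, i.e., ν(0)=0, ν(1)=1, and ν(a∨b) = ν(a) + ν(b) whenever a ⊥ b. -/
/-- `ν(b) = p(b,b)` is a state on `L`. -/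
theorem smap_diag_state {L : Type*} [QuantumLogic L] (p : L → L → ℝ) (hp : IsSMap p) :
    p (⊥ : L) ⊥ = 0 ∧ p (⊤ : L) ⊤ = 1 ∧
      ∀ a b : L, Orth a b → p (a ⊔ b) (a ⊔ b) = p a a + p b b := by
  refine ⟨hp.orth_zero _ _ bot_le, hp.top_top, fun a b hab => ?_⟩
  have hba : Orth b a := by
    have := QuantumLogic.compl_le_compl _ _ hab
    rwa [QuantumLogic.compl_compl] at this
  rw [hp.add_left a b _ hab, hp.add_right a b a hab, hp.add_right a b b hab,
    hp.orth_zero a b hab, hp.orth_zero b a hba]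
  ring
end

section
/- Let p be an s-map on a quantum logic L and x, y discrete observables with finite spectra. Then there exists a finite probability space (Ω, P) and random variables ξ, η on Ω such that E(ξ) = ν(x), E(η) = ν(y), and Cov(ξ,η) = c(x,y) = p(x,y) − ν(x)ν(y), where ν(z) denotes the expectation of z in the state ν(b)=p(b,b). -/
section Helpers
variable {L : Type*} [QuantumLogic L]

lemma orth_symm' {a b : L} (h : Orth a b) : Orth b a := by
  have := QuantumLogic.compl_le_compl _ _ h
  rwa [QuantumLogic.compl_compl] at this

lemma smap_sup_left (p : L → L → ℝ) (hp : IsSMap p) {ι : Type*} [DecidableEq ι]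
    (e : ι → L) (he : ∀ i j, i ≠ j → Orth (e i) (e j)) (s : Finset ι) (c : L) :
    p (s.sup e) c = ∑ i ∈ s, p (e i) c := by
  induction s using Finset.induction_on with
  | empty => simp [hp.orth_zero ⊥ c bot_le]
  | @insert i s hi ih =>
    have horth : Orth (e i) (s.sup e) := by
      apply orth_symm'
      exact Finset.sup_le fun j hj => he j i (fun h => hi (h ▸ hj))
    rw [Finset.sup_insert, hp.add_left _ _ _ horth, ih, Finset.sum_insert hi]

lemma smap_sup_right (p : L → L → ℝ) (hp : IsSMap p) {ι : Type*} [DecidableEq ι]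
    (e : ι → L) (he : ∀ i j, i ≠ j → Orth (e i) (e j)) (s : Finset ι) (c : L) :
    p c (s.sup e) = ∑ i ∈ s, p c (e i) := by
  induction s using Finset.induction_on with
  | empty => simp [hp.orth_zero c ⊥ (orth_symm' bot_le)]
  | @insert i s hi ih =>
    have horth : Orth (e i) (s.sup e) := by
      apply orth_symm'
      exact Finset.sup_le fun j hj => he j i (fun h => hi (h ▸ hj))
    rw [Finset.sup_insert, hp.add_right _ _ _ horth, ih, Finset.sum_insert hi]

lemma smap_top_right (p : L → L → ℝ) (hp : IsSMap p) (a : L) : p a ⊤ = p a a := by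
  have h1 : Orth a aᶜ := by rw [Orth, QuantumLogic.compl_compl]
  rw [← QuantumLogic.sup_compl a, hp.add_right _ _ _ h1,
    hp.orth_zero a aᶜ h1, add_zero]

lemma smap_top_left (p : L → L → ℝ) (hp : IsSMap p) (a : L) : p ⊤ a = p a a := by
  have h1 : Orth a aᶜ := by rw [Orth, QuantumLogic.compl_compl]
  have h2 : Orth aᶜ a := le_refl _
  rw [← QuantumLogic.sup_compl a, hp.add_left _ _ _ h1,
    hp.orth_zero aᶜ a h2, add_zero]

end Helpers

/-- realization of `ν(x)`, `ν(y)` and `c(x,y)` as expectations and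
covariance of random variables on a finite probability space. -/
theorem smap_cov_representation {L : Type*} [QuantumLogic L] (p : L → L → ℝ)
    (hp : IsSMap p) {n m : ℕ} (xv : Fin n → ℝ) (xe : Fin n → L)
    (yv : Fin m → ℝ) (ye : Fin m → L)
    (hxv : Function.Injective xv) (hx : IsFinObs xe)
    (hyv : Function.Injective yv) (hy : IsFinObs ye) :
    ∃ (N : ℕ) (P ξ η : Fin N → ℝ),
      (∀ ω, 0 ≤ P ω) ∧ (∑ ω, P ω = 1) ∧
      (∑ ω, P ω * ξ ω = nuObs p xv xe) ∧
      (∑ ω, P ω * η ω = nuObs p yv ye) ∧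
      (∑ ω, P ω * ((ξ ω - nuObs p xv xe) * (η ω - nuObs p yv ye))
        = covObs p xv xe yv ye) := by
  classical
  set a := nuObs p xv xe with ha
  set b := nuObs p yv ye with hb
  set Q : Fin n × Fin m → ℝ := fun z => p (xe z.1) (ye z.2) with hQ
  set xi : Fin n × Fin m → ℝ := fun z => xv z.1 with hxi
  set eta : Fin n × Fin m → ℝ := fun z => yv z.2 with heta
  have hrow : ∀ i, ∑ j, p (xe i) (ye j) = p (xe i) ⊤ := by
    intro i
    rw [← smap_sup_right p hp ye hy.1 Finset.univ (xe i), hy.2]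
  have hcol : ∀ j, ∑ i, p (xe i) (ye j) = p ⊤ (ye j) := by
    intro j
    rw [← smap_sup_left p hp xe hx.1 Finset.univ (ye j), hx.2]
  have hsum1 : ∑ z : Fin n × Fin m, Q z = 1 := by
    rw [Fintype.sum_prod_type]
    calc ∑ i, ∑ j, Q (i, j) = ∑ i, p (xe i) ⊤ := Finset.sum_congr rfl fun i _ => hrow i
    _ = p ⊤ ⊤ := by rw [← smap_sup_left p hp xe hx.1 Finset.univ ⊤, hx.2]
    _ = 1 := hp.top_top
  have hEx : ∑ z : Fin n × Fin m, Q z * xi z = a := by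
    rw [Fintype.sum_prod_type, ha, nuObs]
    refine Finset.sum_congr rfl fun i _ => ?_
    simp only [hQ, hxi]
    rw [← Finset.sum_mul]
    rw [hrow i, smap_top_right p hp, mul_comm]
  have hEy : ∑ z : Fin n × Fin m, Q z * eta z = b := by
    rw [Fintype.sum_prod_type_right, hb, nuObs]
    refine Finset.sum_congr rfl fun j _ => ?_
    simp only [hQ, heta]
    rw [← Finset.sum_mul]
    rw [hcol j, smap_top_left p hp, mul_comm]
  have hExy : ∑ z : Fin n × Fin m, Q z * (xi z * eta z) = jointMoment p xv xe yv ye := by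
    rw [Fintype.sum_prod_type, jointMoment]
    refine Finset.sum_congr rfl fun i _ => Finset.sum_congr rfl fun j _ => ?_
    simp only [hQ, hxi, heta]; ring
  have hcov : ∑ z : Fin n × Fin m, Q z * ((xi z - a) * (eta z - b))
      = covObs p xv xe yv ye := by
    have expand : ∀ z : Fin n × Fin m, Q z * ((xi z - a) * (eta z - b))
        = Q z * (xi z * eta z) - b * (Q z * xi z) - a * (Q z * eta z) + a * b * Q z := by
      intro z; ring
    rw [Finset.sum_congr rfl fun z _ => expand z]
    rw [Finset.sum_add_distrib, Finset.sum_sub_distrib, Finset.sum_sub_distrib,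
      ← Finset.mul_sum, ← Finset.mul_sum, ← Finset.mul_sum,
      hExy, hEx, hEy, hsum1, covObs]
    ring
  refine ⟨n * m, Q ∘ finProdFinEquiv.symm, xi ∘ finProdFinEquiv.symm,
    eta ∘ finProdFinEquiv.symm, fun ω => hp.nonneg _ _, ?_, ?_, ?_, ?_⟩
  · exact (Fintype.sum_bijective finProdFinEquiv.symm finProdFinEquiv.symm.bijective
      _ _ (fun ω => rfl)).trans hsum1
  · exact (Fintype.sum_bijective finProdFinEquiv.symm finProdFinEquiv.symm.bijective
      _ (fun z => Q z * xi z) (fun ω => rfl)).trans hEx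
  · exact (Fintype.sum_bijective finProdFinEquiv.symm finProdFinEquiv.symm.bijective
      _ (fun z => Q z * eta z) (fun ω => rfl)).trans hEy
  · exact (Fintype.sum_bijective finProdFinEquiv.symm finProdFinEquiv.symm.bijective
      _ (fun z => Q z * ((xi z - a) * (eta z - b))) (fun ω => rfl)).trans hcov
end

section
/- There exists a quantum logic L with two noncompatible elements a, b and an s-map p on L such that p(a,b) = p(b,a); hence symmetry of the joint distribution does not imply compatibility. -/
-- Auxiliary construction: MO2, the horizontal sum of two 4-element Boolean algebras.
inductive MO2 : Type
  | z | a | a' | b | b' | o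
  deriving DecidableEq

instance : Fintype MO2 :=
  ⟨⟨{MO2.z, MO2.a, MO2.a', MO2.b, MO2.b', MO2.o}, by decide⟩, fun x => by cases x <;> decide⟩

namespace MO2

def le : MO2 → MO2 → Bool := fun x y => x = z || y = o || x = y

def sup' : MO2 → MO2 → MO2 := fun x y =>
  if le x y then y else if le y x then x else o

def inf' : MO2 → MO2 → MO2 := fun x y =>
  if le x y then x else if le y x then y else z

def c : MO2 → MO2
  | z => o | o => z | a => a' | a' => a | b => b' | b' => b

instance : LE MO2 := ⟨fun x y => le x y = true⟩
instance : LT MO2 := ⟨fun x y => le x y = true ∧ ¬ (le y x = true)⟩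

instance (x y : MO2) : Decidable (x ≤ y) := inferInstanceAs (Decidable (_ = true))
instance (x y : MO2) : Decidable (x < y) := inferInstanceAs (Decidable (_ ∧ _))

instance : Lattice MO2 where
  le_refl := by decide
  le_trans := by decide
  le_antisymm := by decide
  lt_iff_le_not_ge := by decide
  sup := sup'
  inf := inf'
  le_sup_left := by decide
  le_sup_right := by decide
  sup_le := by decide
  inf_le_left := by decide
  inf_le_right := by decide
  le_inf := by decide

instance : BoundedOrder MO2 where
  top := o
  bot := z
  le_top := by decide
  bot_le := by decide

instance : Compl MO2 := ⟨c⟩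

instance instQL : QuantumLogic MO2 where
  compl_compl := by decide
  sup_compl := by decide
  compl_le_compl := by decide
  orthomodular := by decide

instance (x y : MO2) : Decidable (Orth x y) := inferInstanceAs (Decidable (x ≤ yᶜ))

/-- Integer-valued table of the s-map (values × 50). -/
def q : MO2 → MO2 → ℤ
  | z, _ => 0
  | _, z => 0
  | a, a => 20 | a, a' => 0 | a, b => 4 | a, b' => 16 | a, o => 20
  | a', a => 0 | a', a' => 30 | a', b => 11 | a', b' => 19 | a', o => 30
  | b, a => 4 | b, a' => 11 | b, b => 15 | b, b' => 0 | b, o => 15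
  | b', a => 16 | b', a' => 19 | b', b => 0 | b', b' => 35 | b', o => 35
  | o, a => 20 | o, a' => 30 | o, b => 15 | o, b' => 35 | o, o => 50

noncomputable def P : MO2 → MO2 → ℝ := fun x y => (q x y : ℝ) / 50

lemma q_nonneg : ∀ x y, (0 : ℤ) ≤ q x y := by decide
lemma q_le : ∀ x y, q x y ≤ 50 := by decide
lemma q_orth : ∀ x y : MO2, Orth x y → q x y = 0 := by decide
lemma q_addl : ∀ x y u : MO2, Orth x y → q (x ⊔ y) u = q x u + q y u := by decide
lemma q_addr : ∀ x y u : MO2, Orth x y → q u (x ⊔ y) = q u x + q u y := by decide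

lemma P_smap : IsSMap P where
  nonneg := fun x y => by
    have := q_nonneg x y
    unfold P; positivity
  le_one := fun x y => by
    have h := q_le x y
    have : (q x y : ℝ) ≤ 50 := by exact_mod_cast h
    unfold P; linarith
  top_top := by
    show (q .o .o : ℝ) / 50 = 1
    norm_num [q]
  orth_zero := fun x y h => by
    have := q_orth x y h
    simp [P, this]
  add_left := fun x y u h => by
    have := q_addl x y u h
    unfold P
    rw [this]; push_cast; ring
  add_right := fun x y u h => by
    have := q_addr x y u h
    unfold P
    rw [this]; push_cast; ring

instance (x y : MO2) : Decidable (Compatible x y) :=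
  decidable_of_iff (∃ a₁ b₁ c : MO2, Orth a₁ b₁ ∧ Orth a₁ c ∧ Orth b₁ c ∧ x = a₁ ⊔ c ∧ y = b₁ ⊔ c)
    Iff.rfl

lemma not_compat : ¬ Compatible MO2.a MO2.b := by decide

lemma P_symm : P MO2.a MO2.b = P MO2.b MO2.a := by simp only [P]; norm_num [q]

end MO2

/-- symmetry of the joint distribution does not imply compatibility. -/
theorem smap_symm_not_compatible :
    ∃ (L : Type) (inst : QuantumLogic L) (p : L → L → ℝ) (a b : L),
      @IsSMap L inst p ∧ ¬ @Compatible L inst a b ∧ p a b = p b a := by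
  exact ⟨MO2, MO2.instQL, MO2.P, MO2.a, MO2.b, MO2.P_smap, MO2.not_compat, MO2.P_symm⟩
end
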